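/- Let η ∈ (1/2, 1). There exist η̄ ∈ (0,1) and a constant C > 0, depending only on η and the dimension n, such that for every measurable set F ⊆ ℝⁿ and every nonnegative measurable function H on D: ∬_{R_{1−η}(F^{[η̄]}) ∩ D} H(y,t) dγ(y) dt/t ≤ C · ∫_F ∬_D 1_{B(y,t)}(x) · γ(B(y,t))^{−1} · H(y,t) dγ(y) (dt/t) dγ(x). -/

import Mathlib

/-!
Take `η̄ = 1/2`. If `(y,t) ∈ R_{1-η}(F^{[1/2]}) ∩ D`, a witness `x ∈ F^{[1/2]}` with
`|x - y| < (1-η)t ≤ t/2` gives `B(x,t/2) ⊆ B(y,t) ⊆ B(x,2t)`, and `B(x,t/2)` is admissible at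
scale `3/2` because `m(y) ≤ 2 m(x)`. On a ball of radius `≤ a m(x)` the Gaussian density stays
within a factor `exp(a(2+a)/2)` of its value at the centre, so `γ` is doubling there and
`γ(B(y,t) ∩ F) ≥ c γ(B(y,t))` with `c = exp(-24) 4^{-n} / 2`. By Tonelli the right-hand side is
`C ∬_D γ(B(y,t) ∩ F) γ(B(y,t))⁻¹ H dγ dt/t`, and the ratio is at least `c` on the region of the
left-hand side.
-/

open MeasureTheory Metric Set
open scoped ENNReal

noncomputable section

/-- Euclidean space ℝⁿ. -/
abbrev E (n : ℕ) := EuclideanSpace ℝ (Fin n)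

/-- The standard Gaussian measure on ℝⁿ. -/
def gaussianM (n : ℕ) : Measure (E n) :=
  volume.withDensity
    (fun x => ENNReal.ofReal ((2 * Real.pi) ^ (-(n : ℝ) / 2) * Real.exp (-‖x‖ ^ 2 / 2)))

/-- m(x) = min {1, 1/|x|} (with value 1 at x = 0). -/
def mFun {n : ℕ} (x : E n) : ℝ := if ‖x‖ ≤ 1 then 1 else ‖x‖⁻¹

/-- The measure `dt/t` on `(0,∞)`. -/
def tMeasure : Measure ℝ :=
  (volume.restrict (Set.Ioi (0 : ℝ))).withDensity fun t => ENNReal.ofReal t⁻¹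

/-- The admissible region `D = {(x,t) : 0 < t < m(x)}`. -/
def Dset (n : ℕ) : Set (E n × ℝ) := {p | 0 < p.2 ∧ p.2 < mFun p.1}

/-- `R_α(A) = {(y,t) : t > 0, d(y,A) < α t}` (stated via a witness in `A`). -/
def Rset (n : ℕ) (α : ℝ) (A : Set (E n)) : Set (E n × ℝ) :=
  {p | 0 < p.2 ∧ ∃ x ∈ A, dist p.1 x < α * p.2}

/-- `A^{[β]}`: the points of admissible `β`-density of `A`, i.e. those `x` with
`γ(A ∩ B) ≥ β γ(B)` for every ball `B ∈ 𝓑_{3/2}` centred at `x`. -/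
def densitySet (n : ℕ) (β : ℝ) (A : Set (E n)) : Set (E n) :=
  {x | ∀ r : ℝ, 0 ≤ r → r ≤ (3 / 2) * mFun x →
    ENNReal.ofReal β * gaussianM n (ball x r) ≤ gaussianM n (A ∩ ball x r)}

def gaussianDensity (n : ℕ) (x : E n) : ℝ :=
  (2 * Real.pi) ^ (-(n : ℝ) / 2) * Real.exp (-‖x‖ ^ 2 / 2)

lemma gaussianDensity_pos (n : ℕ) (x : E n) : 0 < gaussianDensity n x := by
  unfold gaussianDensity; positivity

lemma continuous_gaussianDensity (n : ℕ) : Continuous (gaussianDensity n) := by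
  unfold gaussianDensity; fun_prop

lemma gaussianDensity_eq_mul_exp {n : ℕ} (x z : E n) :
    gaussianDensity n z = gaussianDensity n x * Real.exp ((‖x‖ ^ 2 - ‖z‖ ^ 2) / 2) := by
  unfold gaussianDensity
  rw [mul_assoc, ← Real.exp_add]
  ring_nf

lemma gaussianM_apply {n : ℕ} {s : Set (E n)} (hs : MeasurableSet s) :
    gaussianM n s = ∫⁻ z in s, ENNReal.ofReal (gaussianDensity n z) :=
  withDensity_apply _ hs

instance (n : ℕ) : IsLocallyFiniteMeasure (gaussianM n) :=
  IsLocallyFiniteMeasure.withDensity_ofReal (continuous_gaussianDensity n)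

instance : SFinite tMeasure := by
  unfold tMeasure; infer_instance

lemma mFun_pos {n : ℕ} (x : E n) : 0 < mFun x := by
  unfold mFun
  split_ifs with h
  · exact one_pos
  · exact inv_pos.2 (by linarith)

lemma le_mFun_iff {n : ℕ} {x : E n} {s : ℝ} (hs : 0 ≤ s) :
    s ≤ mFun x ↔ s ≤ 1 ∧ s * ‖x‖ ≤ 1 := by
  unfold mFun
  split_ifs with h
  · exact ⟨fun h1 => ⟨h1, mul_le_one₀ h1 (norm_nonneg x) h⟩, And.left⟩
  · have hx : 0 < ‖x‖ := by linarith
    rw [← one_div, le_div_iff₀ hx]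
    exact ⟨fun h1 => ⟨by nlinarith, h1⟩, And.right⟩

lemma mFun_le_one {n : ℕ} (x : E n) : mFun x ≤ 1 :=
  ((le_mFun_iff (mFun_pos x).le).1 le_rfl).1

lemma mFun_mul_norm_le_one {n : ℕ} (x : E n) : mFun x * ‖x‖ ≤ 1 :=
  ((le_mFun_iff (mFun_pos x).le).1 le_rfl).2

lemma mFun_le_two_mul {n : ℕ} {x y : E n} (h : dist x y ≤ mFun y) : mFun y ≤ 2 * mFun x := by
  have hxy : ‖x‖ ≤ ‖y‖ + mFun y := by
    linarith [norm_le_norm_add_norm_sub' x y, dist_eq_norm x y]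
  have := mFun_le_one y
  have := mFun_mul_norm_le_one y
  have := mFun_pos y
  have : mFun y / 2 ≤ mFun x :=
    (le_mFun_iff (by positivity)).2 ⟨by linarith, by nlinarith [norm_nonneg x]⟩
  linarith

lemma abs_norm_sq_sub_norm_sq_le {n : ℕ} {x z : E n} {a : ℝ} (ha : 0 ≤ a)
    (h : dist z x ≤ a * mFun x) : |‖z‖ ^ 2 - ‖x‖ ^ 2| ≤ a * (2 + a) := by
  have hzx : |‖z‖ - ‖x‖| ≤ a * mFun x := (abs_norm_sub_norm_le z x).trans (dist_eq_norm z x ▸ h)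
  have hsum : ‖z‖ + ‖x‖ ≤ 2 * ‖x‖ + a * mFun x := by linarith [(abs_le.1 hzx).2]
  calc |‖z‖ ^ 2 - ‖x‖ ^ 2| = |‖z‖ - ‖x‖| * (‖z‖ + ‖x‖) := by
        rw [sq_sub_sq, abs_mul, abs_of_nonneg (by positivity : 0 ≤ ‖z‖ + ‖x‖), mul_comm]
    _ ≤ a * mFun x * (2 * ‖x‖ + a * mFun x) := by have := mFun_pos x; gcongr
    _ = 2 * a * (mFun x * ‖x‖) + a ^ 2 * mFun x ^ 2 := by ring
    _ ≤ 2 * a * 1 + a ^ 2 * 1 := by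
        gcongr
        · exact mFun_mul_norm_le_one x
        · exact pow_le_one₀ (mFun_pos x).le (mFun_le_one x)
    _ = a * (2 + a) := by ring

section GaussianBalls

variable {n : ℕ} {x : E n} {a r : ℝ}

lemma gaussianDensity_le_of_dist_le {z : E n} (ha : 0 ≤ a) (h : dist z x ≤ a * mFun x) :
    gaussianDensity n z ≤ Real.exp (a * (2 + a) / 2) * gaussianDensity n x := by
  have := abs_le.1 (abs_norm_sq_sub_norm_sq_le ha h)
  rw [gaussianDensity_eq_mul_exp x z, mul_comm]
  exact mul_le_mul_of_nonneg_right (Real.exp_le_exp.2 (by linarith)) (gaussianDensity_pos n x).le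

lemma le_gaussianDensity_of_dist_le {z : E n} (ha : 0 ≤ a) (h : dist z x ≤ a * mFun x) :
    Real.exp (-(a * (2 + a) / 2)) * gaussianDensity n x ≤ gaussianDensity n z := by
  have := abs_le.1 (abs_norm_sq_sub_norm_sq_le ha h)
  rw [gaussianDensity_eq_mul_exp x z, mul_comm (gaussianDensity n x)]
  exact mul_le_mul_of_nonneg_right (Real.exp_le_exp.2 (by linarith)) (gaussianDensity_pos n x).le

lemma gaussianM_ball_le (ha : 0 ≤ a) (hr : r ≤ a * mFun x) :
    gaussianM n (ball x r) ≤
      ENNReal.ofReal (Real.exp (a * (2 + a) / 2) * gaussianDensity n x) * volume (ball x r) := by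
  rw [gaussianM_apply measurableSet_ball, ← setLIntegral_const]
  exact setLIntegral_mono measurable_const fun z hz =>
    ENNReal.ofReal_le_ofReal (gaussianDensity_le_of_dist_le ha ((mem_ball.1 hz).le.trans hr))

lemma le_gaussianM_ball (ha : 0 ≤ a) (hr : r ≤ a * mFun x) :
    ENNReal.ofReal (Real.exp (-(a * (2 + a) / 2)) * gaussianDensity n x) * volume (ball x r) ≤
      gaussianM n (ball x r) := by
  rw [gaussianM_apply measurableSet_ball, ← setLIntegral_const]
  exact setLIntegral_mono (continuous_gaussianDensity n).measurable.ennreal_ofReal fun z hz =>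
    ENNReal.ofReal_le_ofReal (le_gaussianDensity_of_dist_le ha ((mem_ball.1 hz).le.trans hr))

lemma gaussianM_ball_pos (x : E n) (hr : 0 < r) : 0 < gaussianM n (ball x r) := by
  have hbound := le_gaussianM_ball (x := x) (a := r / mFun x) (by have := mFun_pos x; positivity)
    (div_mul_cancel₀ r (mFun_pos x).ne').ge
  refine lt_of_lt_of_le (ENNReal.mul_pos ?_ (measure_ball_pos volume x hr).ne') hbound
  exact (ENNReal.ofReal_pos.2 (by have := gaussianDensity_pos n x; positivity)).ne'

lemma gaussianM_ball_mul_le {s : ℝ} (ha : 0 ≤ a) (hr : 0 < r) (hs : 1 ≤ s)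
    (hsr : s * r ≤ a * mFun x) :
    gaussianM n (ball x (s * r)) ≤
      ENNReal.ofReal (Real.exp (a * (2 + a)) * s ^ n) * gaussianM n (ball x r) := by
  have hr' : r ≤ a * mFun x := le_trans (by nlinarith) hsr
  have hvol : volume (ball x (s * r)) = ENNReal.ofReal (s ^ n) * volume (ball x r) := by
    rw [Measure.addHaar_ball_mul_of_pos volume x (by linarith), finrank_euclideanSpace_fin,
      Measure.addHaar_ball_center volume x r]
  have hφ := gaussianDensity_pos n x
  calc gaussianM n (ball x (s * r))
      ≤ ENNReal.ofReal (Real.exp (a * (2 + a) / 2) * gaussianDensity n x) *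
          volume (ball x (s * r)) := gaussianM_ball_le ha hsr
    _ = ENNReal.ofReal (Real.exp (a * (2 + a)) * s ^ n) *
          (ENNReal.ofReal (Real.exp (-(a * (2 + a) / 2)) * gaussianDensity n x) *
            volume (ball x r)) := by
        rw [hvol, ← mul_assoc, ← mul_assoc, ← ENNReal.ofReal_mul (by positivity),
          ← ENNReal.ofReal_mul (by positivity)]
        congr 2
        rw [show Real.exp (a * (2 + a)) = Real.exp (a * (2 + a) / 2) * Real.exp (a * (2 + a) / 2)
          by rw [← Real.exp_add]; ring_nf, Real.exp_neg]
        field_simp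
    _ ≤ ENNReal.ofReal (Real.exp (a * (2 + a)) * s ^ n) * gaussianM n (ball x r) := by
        gcongr
        exact le_gaussianM_ball ha hr'

end GaussianBalls

section BallAverage

variable {X : Type*} [PseudoMetricSpace X] [MeasurableSpace X] [OpensMeasurableSpace X]
  [SecondCountableTopology X] (μ : Measure X) [SFinite μ]

lemma measurableSet_setOf_mem_ball :
    MeasurableSet {q : (X × ℝ) × X | q.2 ∈ ball q.1.1 q.1.2} :=
  (isOpen_lt (continuous_snd.dist continuous_fst.fst) continuous_fst.snd).measurableSet

lemma measurable_measure_ball : Measurable fun p : X × ℝ => μ (ball p.1 p.2) :=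
  measurable_measure_prodMk_left measurableSet_setOf_mem_ball

lemma measurable_measure_ball_inter (F : Set X) :
    Measurable fun p : X × ℝ => μ (ball p.1 p.2 ∩ F) := by
  simpa only [Measure.restrict_apply measurableSet_ball] using
    measurable_measure_ball (μ.restrict F)

lemma setLIntegral_lintegral_indicator_ball (ν : Measure (X × ℝ)) [SFinite ν] {F : Set X}
    {H : X × ℝ → ℝ≥0∞} (hH : Measurable H) :
    ∫⁻ x in F, ∫⁻ p, (ball p.1 p.2).indicator (fun _ => (μ (ball p.1 p.2))⁻¹) x * H p ∂ν ∂μ =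
      ∫⁻ p, (μ (ball p.1 p.2))⁻¹ * μ (ball p.1 p.2 ∩ F) * H p ∂ν := by
  have hmeas : Measurable (Function.uncurry fun (x : X) (p : X × ℝ) =>
      (ball p.1 p.2).indicator (fun _ => (μ (ball p.1 p.2))⁻¹) x * H p) :=
    ((((measurable_measure_ball μ).inv.comp measurable_fst).indicator
      measurableSet_setOf_mem_ball).comp measurable_swap).mul (hH.comp measurable_snd)
  rw [lintegral_lintegral_swap hmeas.aemeasurable]
  refine lintegral_congr fun p => ?_
  rw [lintegral_mul_const _ (measurable_const.indicator measurableSet_ball),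
    lintegral_indicator measurableSet_ball, setLIntegral_const,
    Measure.restrict_apply measurableSet_ball]

end BallAverage

lemma gaussianM_ball_le_of_mem_Rset {n : ℕ} {η β : ℝ} (hη : 1 / 2 ≤ η) (hβ : 0 < β)
    {F : Set (E n)} {p : E n × ℝ} (hR : p ∈ Rset n (1 - η) (densitySet n β F))
    (hD : p ∈ Dset n) :
    gaussianM n (ball p.1 p.2) ≤
      ENNReal.ofReal (β⁻¹ * (Real.exp 24 * 4 ^ n)) * gaussianM n (ball p.1 p.2 ∩ F) := by
  obtain ⟨ht, x, hxF, hyx⟩ := hR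
  obtain ⟨y, t⟩ := p
  have htm : t < mFun y := hD.2
  have hyx' : dist y x < t / 2 := hyx.trans_le (by nlinarith)
  have hmx : mFun y ≤ 2 * mFun x := mFun_le_two_mul (by rw [dist_comm]; linarith)
  have hdens := hxF (t / 2) (by positivity) (by linarith)
  have hsmall : ball x (t / 2) ⊆ ball y t := ball_subset_ball' (by rw [dist_comm]; linarith)
  have hbig : ball y t ⊆ ball x (4 * (t / 2)) := ball_subset_ball' (by linarith)
  have hdoubling : gaussianM n (ball x (4 * (t / 2))) ≤
      ENNReal.ofReal (Real.exp 24 * 4 ^ n) * gaussianM n (ball x (t / 2)) := by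
    have := gaussianM_ball_mul_le (a := 4) (x := x) (r := t / 2) (s := 4) (by norm_num)
      (by positivity) (by norm_num) (by linarith)
    norm_num at this ⊢
    exact this
  have hβ' : ENNReal.ofReal β⁻¹ * ENNReal.ofReal β = 1 := by
    rw [← ENNReal.ofReal_mul (by positivity), inv_mul_cancel₀ hβ.ne', ENNReal.ofReal_one]
  calc gaussianM n (ball y t)
      ≤ ENNReal.ofReal (Real.exp 24 * 4 ^ n) * gaussianM n (ball x (t / 2)) :=
        (measure_mono hbig).trans hdoubling
    _ = ENNReal.ofReal (Real.exp 24 * 4 ^ n) * ENNReal.ofReal β⁻¹ *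
          (ENNReal.ofReal β * gaussianM n (ball x (t / 2))) := by
        rw [mul_assoc, ← mul_assoc (ENNReal.ofReal β⁻¹), hβ', one_mul]
    _ ≤ ENNReal.ofReal (Real.exp 24 * 4 ^ n) * ENNReal.ofReal β⁻¹ *
          gaussianM n (ball y t ∩ F) := by
        gcongr
        exact hdens.trans (measure_mono (by rw [inter_comm]; gcongr))
    _ = ENNReal.ofReal (β⁻¹ * (Real.exp 24 * 4 ^ n)) * gaussianM n (ball y t ∩ F) := by
        rw [mul_comm (ENNReal.ofReal _), ← ENNReal.ofReal_mul (by positivity)]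

lemma one_le_mul_inv_gaussianM_ball_mul {n : ℕ} {η β : ℝ} (hη : 1 / 2 ≤ η) (hβ : 0 < β)
    {F : Set (E n)} {p : E n × ℝ} (hR : p ∈ Rset n (1 - η) (densitySet n β F))
    (hD : p ∈ Dset n) :
    1 ≤ ENNReal.ofReal (β⁻¹ * (Real.exp 24 * 4 ^ n)) *
      ((gaussianM n (ball p.1 p.2))⁻¹ * gaussianM n (ball p.1 p.2 ∩ F)) := by
  have hpos := (gaussianM_ball_pos p.1 hD.1).ne'
  calc (1 : ℝ≥0∞) = (gaussianM n (ball p.1 p.2))⁻¹ * gaussianM n (ball p.1 p.2) :=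
        (ENNReal.inv_mul_cancel hpos measure_ball_lt_top.ne).symm
    _ ≤ (gaussianM n (ball p.1 p.2))⁻¹ * (ENNReal.ofReal (β⁻¹ * (Real.exp 24 * 4 ^ n)) *
          gaussianM n (ball p.1 p.2 ∩ F)) := by
        gcongr
        exact gaussianM_ball_le_of_mem_Rset hη hβ hR hD
    _ = _ := by ring

theorem stmt11_general (n : ℕ) (η : ℝ) (hη : η ∈ Set.Ioo (1 / 2 : ℝ) 1) :
    ∃ ηb ∈ Set.Ioo (0 : ℝ) 1, ∃ C : ℝ, 0 < C ∧
      ∀ F : Set (E n), MeasurableSet F →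
        ∀ H : E n × ℝ → ℝ≥0∞, Measurable H →
          (∫⁻ p in Rset n (1 - η) (densitySet n ηb F) ∩ Dset n, H p
              ∂((gaussianM n).prod tMeasure)) ≤
            ENNReal.ofReal C *
              ∫⁻ x in F, (∫⁻ p in Dset n,
                  (ball p.1 p.2).indicator (fun _ => (gaussianM n (ball p.1 p.2))⁻¹) x * H p
                  ∂((gaussianM n).prod tMeasure)) ∂(gaussianM n) := by
  set C : ℝ := (1 / 2)⁻¹ * (Real.exp 24 * 4 ^ n)
  refine ⟨1 / 2, ⟨by norm_num, by norm_num⟩, C, by positivity, fun F _ H hH => ?_⟩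
  set γ := gaussianM n
  have hratio : Measurable fun p : E n × ℝ => (γ (ball p.1 p.2))⁻¹ * γ (ball p.1 p.2 ∩ F) * H p :=
    ((measurable_measure_ball γ).inv.mul (measurable_measure_ball_inter γ F)).mul hH
  rw [setLIntegral_lintegral_indicator_ball γ _ hH, ← lintegral_const_mul _ hratio]
  calc ∫⁻ p in Rset n (1 - η) (densitySet n (1 / 2) F) ∩ Dset n, H p ∂γ.prod tMeasure
      ≤ ∫⁻ p in Rset n (1 - η) (densitySet n (1 / 2) F) ∩ Dset n, ENNReal.ofReal C *
          ((γ (ball p.1 p.2))⁻¹ * γ (ball p.1 p.2 ∩ F) * H p) ∂γ.prod tMeasure := by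
        refine setLIntegral_mono (measurable_const.mul hratio) fun p ⟨hR, hD⟩ => ?_
        calc H p = 1 * H p := (one_mul _).symm
          _ ≤ _ := mul_le_mul_left
              (one_le_mul_inv_gaussianM_ball_mul hη.1.le (by norm_num) hR hD) _
          _ = _ := by ring
    _ ≤ _ := lintegral_mono_set inter_subset_right

/-- For `η ∈ (1/2,1)` there are `η̄ ∈ (0,1)` and `C > 0`, depending only on `η` and `n`,
such that for every measurable `F ⊆ ℝⁿ` and nonnegative measurable `H` on `D`:
`∬_{R_{1-η}(F^{[η̄]}) ∩ D} H dγ dt/t ≤ C ∫_F ∬_D 1_{B(y,t)}(x) γ(B(y,t))⁻¹ H(y,t) dγ(y) dt/t dγ(x)`. -/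
theorem stmt11 (n : ℕ) (hn : 1 ≤ n) (η : ℝ) (hη : η ∈ Set.Ioo (1 / 2 : ℝ) 1) :
    ∃ ηb ∈ Set.Ioo (0 : ℝ) 1, ∃ C : ℝ, 0 < C ∧
      ∀ F : Set (E n), MeasurableSet F →
        ∀ H : E n × ℝ → ℝ≥0∞, Measurable H →
          (∫⁻ p in Rset n (1 - η) (densitySet n ηb F) ∩ Dset n, H p
              ∂((gaussianM n).prod tMeasure)) ≤
            ENNReal.ofReal C *
              ∫⁻ x in F, (∫⁻ p in Dset n,
                  (ball p.1 p.2).indicator (fun _ => (gaussianM n (ball p.1 p.2))⁻¹) x * H p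
                  ∂((gaussianM n).prod tMeasure)) ∂(gaussianM n) :=
  stmt11_general n η hη
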